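/- arXiv:1511.04500 — 2 statements merged into one kernel-verified Lean document; each statement's English description precedes it below -/
import Mathlib

section
/- Let d ≥ 2. The number of pairs (β, α) of permutations of {0,1,...,d} with β(0)=0, β(1)=d, β(i+1)+β(d+1-i)=d for 1 ≤ i ≤ d-1, and α(0)=0, α(i)+α(d+1-i)=d+1 for 1 ≤ i ≤ d, equals 2^{d-1}·⌊d/2⌋!·⌊(d-1)/2⌋!. -/
namespace Stmt11


def pf (m : ℕ) (σ : Equiv.Perm (Fin m)) (t : ℕ) : ℕ :=
  if h : t < m then (σ ⟨t, h⟩).val else t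

def ef (m : ℕ) (ε : Fin m → Bool) (t : ℕ) : Bool :=
  if h : t < m then ε ⟨t, h⟩ else false

lemma pf_lt {m : ℕ} {σ : Equiv.Perm (Fin m)} {t : ℕ} (h : t < m) : pf m σ t < m := by
  simp only [pf, dif_pos h]; exact (σ ⟨t, h⟩).isLt

lemma pf_comp {m : ℕ} (σ : Equiv.Perm (Fin m)) (t : ℕ) : pf m σ (pf m σ⁻¹ t) = t := by
  by_cases h : t < m
  · have h2 : pf m σ⁻¹ t < m := pf_lt h
    rw [pf, dif_pos h2]
    have h3 : (⟨pf m σ⁻¹ t, h2⟩ : Fin m) = σ⁻¹ ⟨t, h⟩ := by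
      apply Fin.ext; simp [pf, dif_pos h]
    rw [h3]; simp
  · simp only [pf, dif_neg h]

def vf (n m : ℕ) (p : ℕ → ℕ) (e : ℕ → Bool) (j : ℕ) : ℕ :=
  if j = 0 then 0
  else if j ≤ m then (if e (j - 1) then p (j - 1) + 1 else n - p (j - 1))
  else if 1 ≤ n + 1 - j ∧ n + 1 - j ≤ m then
    (if e (n - j) then n - p (n - j) else p (n - j) + 1)
  else j

lemma vf_zero (n m : ℕ) (p : ℕ → ℕ) (e : ℕ → Bool) : vf n m p e 0 = 0 := by simp [vf]

lemma vf_low {n m : ℕ} {p : ℕ → ℕ} {e : ℕ → Bool} {j : ℕ} (h1 : 1 ≤ j) (h2 : j ≤ m) :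
    vf n m p e j = if e (j - 1) then p (j - 1) + 1 else n - p (j - 1) := by
  rw [vf, if_neg (by omega), if_pos h2]

lemma vf_up {n m : ℕ} {p : ℕ → ℕ} {e : ℕ → Bool} {j : ℕ} (h2 : ¬ j ≤ m)
    (h3 : 1 ≤ n + 1 - j) (h4 : n + 1 - j ≤ m) :
    vf n m p e j = if e (n - j) then n - p (n - j) else p (n - j) + 1 := by
  rw [vf, if_neg (by omega), if_neg h2, if_pos ⟨h3, h4⟩]

lemma vf_else {n m : ℕ} {p : ℕ → ℕ} {e : ℕ → Bool} {j : ℕ} (h1 : ¬ j = 0) (h2 : ¬ j ≤ m)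
    (h3 : ¬ (1 ≤ n + 1 - j ∧ n + 1 - j ≤ m)) : vf n m p e j = j := by
  rw [vf, if_neg h1, if_neg h2, if_neg h3]

lemma vf_le {n m : ℕ} {p : ℕ → ℕ} {e : ℕ → Bool} {j : ℕ} (hm : 2 * m ≤ n)
    (Hp : ∀ t, t < m → p t < m) (hj : j ≤ n) : vf n m p e j ≤ n := by
  rcases Nat.eq_zero_or_pos j with h | h
  · subst h; rw [vf_zero]; omega
  by_cases h2 : j ≤ m
  · rw [vf_low h h2]
    have := Hp (j - 1) (by omega)
    split <;> omega
  · by_cases h3 : 1 ≤ n + 1 - j ∧ n + 1 - j ≤ m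
    · rw [vf_up h2 h3.1 h3.2]
      have := Hp (n - j) (by omega)
      split <;> omega
    · rw [vf_else (by omega) h2 h3]; omega

lemma vf_comp {n m : ℕ} {p q : ℕ → ℕ} {e f : ℕ → Bool} {j : ℕ}
    (hm1 : 2 * m ≤ n) (hm2 : n ≤ 2 * m + 1)
    (Hp : ∀ t, t < m → p t < m) (Hq : ∀ t, t < m → q t < m)
    (Hpq : ∀ t, t < m → p (q t) = t) (Hf : ∀ t, t < m → f t = e (q t))
    (hj : j ≤ n) : vf n m p e (vf n m q f j) = j := by
  rcases Nat.eq_zero_or_pos j with h | h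
  · subst h; rw [vf_zero, vf_zero]
  by_cases h2 : j ≤ m
  · -- lower range
    have ht : j - 1 < m := by omega
    have hq := Hq _ ht
    rw [vf_low h h2]
    rcases hb : f (j - 1) with _ | _
    · -- f false : k = n - q (j-1), upper range
      rw [if_neg (by simp)]
      have hk2 : ¬ (n - q (j - 1)) ≤ m := by omega
      rw [vf_up hk2 (by omega) (by omega)]
      rw [show n - (n - q (j - 1)) = q (j - 1) by omega, ← Hf _ ht, hb]
      rw [if_neg (by simp), Hpq _ ht]; omega
    · -- f true : k = q (j-1) + 1, lower range
      rw [if_pos rfl, vf_low (by omega) (by omega)]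
      rw [show q (j - 1) + 1 - 1 = q (j - 1) by omega, ← Hf _ ht, hb]
      rw [if_pos rfl, Hpq _ ht]; omega
  · by_cases h3 : 1 ≤ n + 1 - j ∧ n + 1 - j ≤ m
    · -- upper range
      have ht : n - j < m := by omega
      have hq := Hq _ ht
      rw [vf_up h2 h3.1 h3.2]
      rcases hb : f (n - j) with _ | _
      · -- f false : k = q (n-j) + 1, lower range
        rw [if_neg (by simp), vf_low (by omega) (by omega)]
        rw [show q (n - j) + 1 - 1 = q (n - j) by omega, ← Hf _ ht, hb]
        rw [if_neg (by simp), Hpq _ ht]; omega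
      · -- f true : k = n - q (n-j), upper range
        rw [if_pos rfl]
        have hk2 : ¬ (n - q (n - j)) ≤ m := by omega
        rw [vf_up hk2 (by omega) (by omega)]
        rw [show n - (n - q (n - j)) = q (n - j) by omega, ← Hf _ ht, hb]
        rw [if_pos rfl, Hpq _ ht]; omega
    · -- middle / else
      rw [vf_else (by omega) h2 h3, vf_else (by omega) h2 h3]

lemma vf_sym {n m : ℕ} {p : ℕ → ℕ} {e : ℕ → Bool} {i : ℕ}
    (hm1 : 2 * m ≤ n) (hm2 : n ≤ 2 * m + 1)
    (Hp : ∀ t, t < m → p t < m) (h1 : 1 ≤ i) (h2 : i ≤ n) :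
    vf n m p e i + vf n m p e (n + 1 - i) = n + 1 := by
  have key : ∀ i, 1 ≤ i → i ≤ m → vf n m p e i + vf n m p e (n + 1 - i) = n + 1 := by
    intro i h1 h2
    have ht : i - 1 < m := by omega
    have hpt := Hp _ ht
    rw [vf_low h1 h2, vf_up (j := n + 1 - i) (by omega) (by omega) (by omega)]
    rw [show n - (n + 1 - i) = i - 1 by omega]
    rcases e (i - 1) with _ | _
    · rw [if_neg (by simp), if_neg (by simp)]; omega
    · rw [if_pos rfl, if_pos rfl]; omega
  by_cases hl : i ≤ m
  · exact key i h1 hl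
  · by_cases hu : n + 1 - i ≤ m
    · have h5 := key (n + 1 - i) (by omega) hu
      rw [show n + 1 - (n + 1 - i) = i by omega] at h5; omega
    · -- middle: i = m + 1, n = 2m+1
      rw [show n + 1 - i = i by omega, vf_else (by omega) (by omega) (by omega)]
      omega


def ebar (m : ℕ) (σ : Equiv.Perm (Fin m)) (ε : Fin m → Bool) (t : ℕ) : Bool :=
  ef m ε (pf m σ⁻¹ t)

lemma pf_comp' {m : ℕ} (σ : Equiv.Perm (Fin m)) (t : ℕ) : pf m σ⁻¹ (pf m σ t) = t := by
  simpa using pf_comp σ⁻¹ t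

def bperm (n m : ℕ) (hm1 : 2 * m ≤ n) (hm2 : n ≤ 2 * m + 1)
    (σ : Equiv.Perm (Fin m)) (ε : Fin m → Bool) : Equiv.Perm (Fin (n + 1)) where
  toFun j := ⟨vf n m (pf m σ) (ef m ε) j.val,
    by have := vf_le (p := pf m σ) (e := ef m ε) hm1 (fun t ht => pf_lt ht)
         (by omega : j.val ≤ n); omega⟩
  invFun j := ⟨vf n m (pf m σ⁻¹) (ebar m σ ε) j.val,
    by have := vf_le (p := pf m σ⁻¹) (e := ebar m σ ε) hm1 (fun t ht => pf_lt ht)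
         (by omega : j.val ≤ n); omega⟩
  left_inv j := by
    apply Fin.ext
    exact vf_comp hm1 hm2 (fun t ht => pf_lt ht) (fun t ht => pf_lt ht)
      (fun t ht => pf_comp' σ t)
      (fun t ht => by unfold ebar; rw [pf_comp' σ t]) (by omega : j.val ≤ n)
  right_inv j := by
    apply Fin.ext
    exact vf_comp hm1 hm2 (fun t ht => pf_lt ht) (fun t ht => pf_lt ht)
      (fun t ht => pf_comp σ t) (fun t ht => rfl) (by omega : j.val ≤ n)

lemma bperm_val {n m : ℕ} (hm1 : 2 * m ≤ n) (hm2 : n ≤ 2 * m + 1)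
    (σ : Equiv.Perm (Fin m)) (ε : Fin m → Bool) (j : Fin (n + 1)) :
    ((bperm n m hm1 hm2 σ ε) j).val = vf n m (pf m σ) (ef m ε) j.val := rfl


def cfun (n : ℕ) (av : ℕ → ℕ) (t : ℕ) : ℕ := min (av (t + 1)) (n + 1 - av (t + 1)) - 1

theorem core_card (n m : ℕ) (hm1 : 2 * m ≤ n) (hm2 : n ≤ 2 * m + 1) :
    Nat.card {α : Equiv.Perm (Fin (n + 1)) // α 0 = 0 ∧
      ∀ (i : ℕ), 1 ≤ i → i ≤ n → ∀ (ha : i < n + 1) (hb : n + 1 - i < n + 1),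
        (α ⟨i, ha⟩).val + (α ⟨n + 1 - i, hb⟩).val = n + 1}
    = 2 ^ m * Nat.factorial m := by
  have hΦ : ∀ (σε : Equiv.Perm (Fin m) × (Fin m → Bool)),
      (bperm n m hm1 hm2 σε.1 σε.2) 0 = 0 ∧
      ∀ (i : ℕ), 1 ≤ i → i ≤ n → ∀ (ha : i < n + 1) (hb : n + 1 - i < n + 1),
        ((bperm n m hm1 hm2 σε.1 σε.2) ⟨i, ha⟩).val
          + ((bperm n m hm1 hm2 σε.1 σε.2) ⟨n + 1 - i, hb⟩).val = n + 1 := by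
    intro σε
    constructor
    · apply Fin.ext
      rw [show ((0 : Fin (n+1))) = ⟨0, by omega⟩ from rfl, bperm_val, vf_zero]
    · intro i h1 h2 ha hb
      rw [bperm_val, bperm_val]
      exact vf_sym hm1 hm2 (fun t ht => pf_lt ht) h1 h2
  have key := Nat.card_eq_of_bijective
    (α := Equiv.Perm (Fin m) × (Fin m → Bool))
    (fun σε => (⟨bperm n m hm1 hm2 σε.1 σε.2, hΦ σε⟩ :
      {α : Equiv.Perm (Fin (n + 1)) // α 0 = 0 ∧
        ∀ (i : ℕ), 1 ≤ i → i ≤ n → ∀ (ha : i < n + 1) (hb : n + 1 - i < n + 1),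
          (α ⟨i, ha⟩).val + (α ⟨n + 1 - i, hb⟩).val = n + 1}))
    ?_
  · rw [← key, Nat.card_prod]
    simp [Nat.card_eq_fintype_card, Fintype.card_perm, Fintype.card_fun, mul_comm]
  constructor
  · -- injective
    rintro ⟨σ, ε⟩ ⟨σ', ε'⟩ hE
    have hP : bperm n m hm1 hm2 σ ε = bperm n m hm1 hm2 σ' ε' :=
      congrArg Subtype.val hE
    have hv : ∀ j : ℕ, j ≤ n →
        vf n m (pf m σ) (ef m ε) j = vf n m (pf m σ') (ef m ε') j := by
      intro j hj
      have := congrArg Fin.val (DFunLike.congr_fun hP ⟨j, by omega⟩)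
      rwa [bperm_val, bperm_val] at this
    have hkey : ∀ t, t < m → ef m ε t = ef m ε' t ∧ pf m σ t = pf m σ' t := by
      intro t ht
      have h := hv (t + 1) (by omega)
      rw [vf_low (by omega) (by omega), vf_low (by omega) (by omega)] at h
      simp only [Nat.add_sub_cancel] at h
      have A := pf_lt (σ := σ) ht
      have B := pf_lt (σ := σ') ht
      rcases he : ef m ε t with _ | _ <;> rcases he' : ef m ε' t with _ | _ <;>
        rw [he, he'] at h <;> simp only [Bool.false_eq_true, if_true, if_false] at h
      · exact ⟨rfl, by omega⟩
      · exact absurd h (by omega)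
      · exact absurd h (by omega)
      · exact ⟨rfl, by omega⟩
    have hσ : σ = σ' := by
      apply Equiv.ext; intro i; apply Fin.ext
      have := (hkey i.val i.isLt).2
      simpa [pf, i.isLt, Fin.eta] using this
    have hε : ε = ε' := by
      funext i
      have := (hkey i.val i.isLt).1
      simpa [ef, i.isLt, Fin.eta] using this
    simp [hσ, hε]
  · -- surjective
    rintro ⟨α, h0, hsym⟩
    set av : ℕ → ℕ := fun i => if h : i < n + 1 then (α ⟨i, h⟩).val else 0 with hav
    have Hlt : ∀ i, i ≤ n → av i ≤ n := by
      intro i hi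
      simp only [hav, dif_pos (show i < n + 1 by omega)]
      have := (α ⟨i, by omega⟩).isLt; omega
    have H0 : av 0 = 0 := by
      simp only [hav, dif_pos (show 0 < n + 1 by omega)]
      rw [show (⟨0, by omega⟩ : Fin (n+1)) = 0 from rfl, h0]; simp
    have Hinj : ∀ i, i ≤ n → ∀ j, j ≤ n → av i = av j → i = j := by
      intro i hi j hj h
      simp only [hav, dif_pos (show i < n + 1 by omega),
        dif_pos (show j < n + 1 by omega)] at h
      have := α.injective (Fin.ext h)
      exact congrArg Fin.val this
    have Hsym : ∀ i, 1 ≤ i → i ≤ n → av i + av (n + 1 - i) = n + 1 := by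
      intro i h1 h2
      simp only [hav, dif_pos (show i < n + 1 by omega),
        dif_pos (show n + 1 - i < n + 1 by omega)]
      exact hsym i h1 h2 (by omega) (by omega)
    have av_pos : ∀ i, 1 ≤ i → i ≤ n → 1 ≤ av i := by
      intro i h1 h2
      by_contra hc
      have : av i = av 0 := by omega
      have := Hinj i h2 0 (by omega) this
      omega
    have av_nmid : ∀ i, 1 ≤ i → i ≤ m → 2 * av i ≠ n + 1 := by
      intro i h1 h2 hc
      have hodd : n = 2 * m + 1 := by omega
      have hs := Hsym (m + 1) (by omega) (by omega)
      rw [show n + 1 - (m + 1) = m + 1 by omega] at hs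
      have : av i = av (m + 1) := by omega
      have := Hinj i (by omega) (m + 1) (by omega) this
      omega
    have c_lt : ∀ t, t < m → cfun n av t < m := by
      intro t ht
      have h1 := av_pos (t + 1) (by omega) (by omega)
      have h2 := Hlt (t + 1) (by omega)
      have h3 := av_nmid (t + 1) (by omega) (by omega)
      unfold cfun
      omega
    have c_inj : ∀ t, t < m → ∀ t', t' < m → cfun n av t = cfun n av t' → t = t' := by
      intro t ht t' ht' hc
      have h1 := av_pos (t + 1) (by omega) (by omega)
      have h2 := Hlt (t + 1) (by omega)
      have h1' := av_pos (t' + 1) (by omega) (by omega)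
      have h2' := Hlt (t' + 1) (by omega)
      unfold cfun at hc
      have hmin : min (av (t+1)) (n+1-av (t+1)) = min (av (t'+1)) (n+1-av (t'+1)) := by
        omega
      have hs := Hsym (t' + 1) (by omega) (by omega)
      have hs2 := Hsym (t + 1) (by omega) (by omega)
      rcases min_cases (av (t+1)) (n+1-av (t+1)) with ⟨hA, _⟩ | ⟨hA, _⟩ <;>
        rcases min_cases (av (t'+1)) (n+1-av (t'+1)) with ⟨hB, _⟩ | ⟨hB, _⟩
      · -- av (t+1) = av (t'+1)
        have := Hinj (t+1) (by omega) (t'+1) (by omega) (by omega)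
        omega
      · -- av (t+1) = n+1-av (t'+1) = av (n+1-(t'+1))
        have : av (t + 1) = av (n + 1 - (t' + 1)) := by omega
        have := Hinj (t+1) (by omega) (n + 1 - (t'+1)) (by omega) this
        omega
      · have : av (n + 1 - (t + 1)) = av (t' + 1) := by omega
        have := Hinj (n + 1 - (t+1)) (by omega) (t'+1) (by omega) this
        omega
      · have := Hinj (t+1) (by omega) (t'+1) (by omega) (by omega)
        omega
    have hs_inj : Function.Injective (fun i : Fin m => (⟨cfun n av i.val, c_lt _ i.isLt⟩ : Fin m)) := by
      intro i j h
      exact Fin.ext (c_inj _ i.isLt _ j.isLt (congrArg Fin.val h))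
    set σ : Equiv.Perm (Fin m) :=
      Equiv.ofBijective _ (Finite.injective_iff_bijective.mp hs_inj) with hσ
    set ε : Fin m → Bool := fun i => decide (av (i.val + 1) ≤ m) with hε
    have hpf : ∀ t, t < m → pf m σ t = cfun n av t := by
      intro t ht
      simp only [pf, dif_pos ht, hσ]
      rfl
    have hef : ∀ t, t < m → ef m ε t = decide (av (t + 1) ≤ m) := by
      intro t ht
      simp only [ef, dif_pos ht, hε]
    have main : ∀ j, j ≤ n → vf n m (pf m σ) (ef m ε) j = av j := by
      intro j hj
      rcases Nat.eq_zero_or_pos j with h | h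
      · subst h; rw [vf_zero, H0]
      by_cases hl : j ≤ m
      · rw [vf_low h hl, hef (j - 1) (by omega), hpf (j - 1) (by omega)]
        have h1 := av_pos j (by omega) (by omega)
        have h2 := Hlt j (by omega)
        have h3 := av_nmid j (by omega) hl
        rw [show j - 1 + 1 = j by omega] at *
        unfold cfun
        rw [show j - 1 + 1 = j by omega]
        by_cases ha : av j ≤ m
        · rw [if_pos (by simpa using ha)]; omega
        · rw [if_neg (by simpa using ha)]; omega
      · by_cases hu : 1 ≤ n + 1 - j ∧ n + 1 - j ≤ m
        · rw [vf_up hl hu.1 hu.2, hef (n - j) (by omega), hpf (n - j) (by omega)]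
          have hs := Hsym (n + 1 - j) hu.1 (by omega)
          rw [show n + 1 - (n + 1 - j) = j by omega] at hs
          have h1 := av_pos (n + 1 - j) hu.1 (by omega)
          have h2 := Hlt (n + 1 - j) (by omega)
          have h3 := av_nmid (n + 1 - j) hu.1 hu.2
          unfold cfun
          rw [show n - j + 1 = n + 1 - j by omega]
          by_cases ha : av (n + 1 - j) ≤ m
          · rw [if_pos (by simpa using ha)]; omega
          · rw [if_neg (by simpa using ha)]; omega
        · rw [vf_else (by omega) hl hu]
          have hs := Hsym j (by omega) hj
          rw [show n + 1 - j = j by omega] at hs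
          omega
    refine ⟨⟨σ, ε⟩, ?_⟩
    apply Subtype.ext
    apply Equiv.ext
    intro j
    apply Fin.ext
    rw [bperm_val, main j.val (by omega)]
    simp only [hav, dif_pos j.isLt, Fin.eta]


/-! ### the β ↔ α transfer -/

def xf (d : ℕ) (pa : ℕ → ℕ) (j : ℕ) : ℕ :=
  if j = 0 then 0 else if j = 1 then d else pa (j - 1)

def yf (d : ℕ) (pb : ℕ → ℕ) (v : ℕ) : ℕ :=
  if v = 0 then 0 else if v = d then 1 else pb v + 1

lemma xf_le {d : ℕ} {pa : ℕ → ℕ} {j : ℕ} (Ha : ∀ t, t < d → pa t < d) (hj : j ≤ d) :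
    xf d pa j ≤ d := by
  unfold xf
  split_ifs with h1 h2
  · omega
  · omega
  · have := Ha (j - 1) (by omega); omega

lemma yf_le {d : ℕ} {pb : ℕ → ℕ} {v : ℕ} (hd : 1 ≤ d) (Hb : ∀ t, t < d → pb t < d)
    (hv : v ≤ d) : yf d pb v ≤ d := by
  unfold yf
  split_ifs with h1 h2
  · omega
  · omega
  · have := Hb v (by omega); omega

lemma yf_xf {d : ℕ} {pa pb : ℕ → ℕ} {j : ℕ} (hd : 2 ≤ d)
    (Ha : ∀ t, t < d → pa t < d) (Hba : ∀ t, t < d → pb (pa t) = t)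
    (Ha0 : pa 0 = 0) (hj : j ≤ d) : yf d pb (xf d pa j) = j := by
  by_cases h1 : j = 0
  · subst h1; simp [xf, yf]
  by_cases h2 : j = 1
  · subst h2
    rw [xf, if_neg (by omega), if_pos rfl, yf, if_neg (by omega), if_pos rfl]
  · rw [xf, if_neg h1, if_neg h2]
    have hlt := Ha (j - 1) (by omega)
    have hb1 := Hba (j - 1) (by omega)
    have hb0 := Hba 0 (by omega)
    rw [Ha0] at hb0
    have hne0 : pa (j - 1) ≠ 0 := by
      intro hc; rw [hc] at hb1; omega
    rw [yf, if_neg hne0, if_neg (by omega), hb1]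
    omega

lemma xf_yf {d : ℕ} {pa pb : ℕ → ℕ} {v : ℕ} (hd : 2 ≤ d)
    (Hb : ∀ t, t < d → pb t < d) (Hab : ∀ t, t < d → pa (pb t) = t)
    (Ha0 : pa 0 = 0) (hv : v ≤ d) : xf d pa (yf d pb v) = v := by
  by_cases h1 : v = 0
  · subst h1; simp [xf, yf]
  by_cases h2 : v = d
  · subst h2
    rw [yf, if_neg (by omega), if_pos rfl, xf, if_neg (by omega), if_pos rfl]
  · rw [yf, if_neg h1, if_neg h2]
    have hlt := Hb v (by omega)
    have hab := Hab v (by omega)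
    have hne0 : pb v ≠ 0 := by
      intro hc; rw [hc, Ha0] at hab; omega
    rw [xf, if_neg (by omega), if_neg (by omega), Nat.add_sub_cancel, hab]

lemma pa_lt {d : ℕ} (hd : 2 ≤ d) (α : Equiv.Perm (Fin (d - 1 + 1))) :
    ∀ t, t < d → pf (d - 1 + 1) α t < d := by
  intro t ht
  have := pf_lt (σ := α) (t := t) (by omega)
  omega

lemma pa_zero {d : ℕ} (hd : 2 ≤ d) (α : Equiv.Perm (Fin (d - 1 + 1))) (h0 : α 0 = 0) :
    pf (d - 1 + 1) α 0 = 0 := by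
  rw [pf, dif_pos (Nat.succ_pos _), show (⟨0, Nat.succ_pos _⟩ : Fin (d - 1 + 1)) = 0 from rfl,
    h0]
  simp

def extp (d : ℕ) (hd : 2 ≤ d) (α : Equiv.Perm (Fin (d - 1 + 1))) (h0 : α 0 = 0) :
    Equiv.Perm (Fin (d + 1)) where
  toFun j := ⟨xf d (pf (d - 1 + 1) α) j.val,
    by have := xf_le (pa_lt hd α) (show j.val ≤ d by omega); omega⟩
  invFun v := ⟨yf d (pf (d - 1 + 1) α⁻¹) v.val,
    by have := yf_le (by omega) (pa_lt hd α⁻¹) (show v.val ≤ d by omega); omega⟩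
  left_inv j := by
    apply Fin.ext
    exact yf_xf hd (pa_lt hd α)
      (fun t ht => by have := pf_comp' α t; omega)
      (pa_zero hd α h0) (by omega)
  right_inv v := by
    apply Fin.ext
    exact xf_yf hd (pa_lt hd α⁻¹)
      (fun t ht => by have := pf_comp α t; omega)
      (pa_zero hd α h0) (by omega)

lemma extp_val {d : ℕ} (hd : 2 ≤ d) (α : Equiv.Perm (Fin (d - 1 + 1))) (h0 : α 0 = 0)
    (j : Fin (d + 1)) : ((extp d hd α h0) j).val = xf d (pf (d - 1 + 1) α) j.val := rfl


lemma xf_big {d : ℕ} {pa : ℕ → ℕ} {j : ℕ} (h1 : 2 ≤ j) : xf d pa j = pa (j - 1) := by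
  rw [xf, if_neg (by omega), if_neg (by omega)]

def rf (pb : ℕ → ℕ) (i : ℕ) : ℕ := if i = 0 then 0 else pb (i + 1)

def ri (pg : ℕ → ℕ) (v : ℕ) : ℕ := if v = 0 then 0 else pg v - 1

section rsec
variable {d : ℕ} {pb pg : ℕ → ℕ} (hd : 2 ≤ d)
  (H0 : pb 0 = 0) (H1 : pb 1 = d)
  (Hlt : ∀ t, t ≤ d → pb t ≤ d) (Hglt : ∀ t, t ≤ d → pg t ≤ d)
  (Hgb : ∀ t, pg (pb t) = t) (Hbg : ∀ t, pb (pg t) = t)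

include hd H0 H1 Hlt Hglt Hgb Hbg

lemma rf_le {i : ℕ} (hi : i ≤ d - 1) : rf pb i ≤ d - 1 := by
  rw [rf]
  split_ifs with h
  · omega
  · have h2 := Hlt (i + 1) (by omega)
    have h3 : pb (i + 1) ≠ d := by
      intro hc
      have := Hgb (i + 1)
      rw [hc, ← H1, Hgb 1] at this
      omega
    omega

lemma ri_le {v : ℕ} (hv : v ≤ d - 1) : ri pg v ≤ d - 1 := by
  rw [ri]
  split_ifs with h
  · omega
  · have h2 := Hglt v (by omega)
    omega

lemma ri_rf {i : ℕ} (hi : i ≤ d - 1) : ri pg (rf pb i) = i := by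
  by_cases h : i = 0
  · subst h; simp [rf, ri]
  · rw [rf, if_neg h]
    have h1 := Hgb (i + 1)
    have h0 : pb (i + 1) ≠ 0 := by
      intro hc
      rw [hc, ← H0, Hgb 0] at h1
      omega
    rw [ri, if_neg h0, h1]
    omega

lemma rf_ri {v : ℕ} (hv : v ≤ d - 1) : rf pb (ri pg v) = v := by
  by_cases h : v = 0
  · subst h; simp [rf, ri]
  · rw [ri, if_neg h]
    have h1 := Hbg v
    have h0 : pg v ≠ 0 := by
      intro hc
      rw [hc, H0] at h1
      omega
    have h2 : pg v ≠ 1 := by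
      intro hc
      rw [hc, H1] at h1
      omega
    rw [rf, if_neg (by omega), show pg v - 1 + 1 = pg v by omega, h1]

end rsec

lemma pf_zero {m : ℕ} (σ : Equiv.Perm (Fin m)) (hm : 0 < m)
    (h0 : σ ⟨0, hm⟩ = ⟨0, hm⟩) : pf m σ 0 = 0 := by
  rw [pf, dif_pos hm, h0]

lemma pf_lt' {m : ℕ} (σ : Equiv.Perm (Fin m)) : ∀ t, t ≤ m - 1 + 1 - 1 → pf m σ t ≤ m - 1 := by
  intro t ht
  by_cases h : t < m
  · have := pf_lt (σ := σ) h; omega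
  · rw [pf, dif_neg h]; omega

def restr (d : ℕ) (hd : 2 ≤ d) (β : Equiv.Perm (Fin (d + 1))) (hb0 : β 0 = 0)
    (hb1 : ∀ (h : 1 < d + 1) (h' : d < d + 1), β ⟨1, h⟩ = ⟨d, h'⟩) :
    Equiv.Perm (Fin (d - 1 + 1)) where
  toFun i := ⟨rf (pf (d + 1) β) i.val, by
    have h2 := rf_le (d := d) (pb := pf (d + 1) β) (pg := pf (d + 1) β⁻¹) hd
      (pf_zero β (by omega) (by rw [show (⟨0, by omega⟩ : Fin (d+1)) = 0 from rfl, hb0]))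
      (by rw [pf, dif_pos (by omega : 1 < d + 1), hb1 (by omega) (by omega)])
      (fun t ht => by have := pf_lt' β t (by omega); omega)
      (fun t ht => by have := pf_lt' β⁻¹ t (by omega); omega)
      (fun t => pf_comp' β t) (fun t => pf_comp β t)
      (show i.val ≤ d - 1 by omega)
    omega⟩
  invFun v := ⟨ri (pf (d + 1) β⁻¹) v.val, by
    have h2 := ri_le (d := d) (pb := pf (d + 1) β) (pg := pf (d + 1) β⁻¹) hd
      (pf_zero β (by omega) (by rw [show (⟨0, by omega⟩ : Fin (d+1)) = 0 from rfl, hb0]))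
      (by rw [pf, dif_pos (by omega : 1 < d + 1), hb1 (by omega) (by omega)])
      (fun t ht => by have := pf_lt' β t (by omega); omega)
      (fun t ht => by have := pf_lt' β⁻¹ t (by omega); omega)
      (fun t => pf_comp' β t) (fun t => pf_comp β t)
      (show v.val ≤ d - 1 by omega)
    omega⟩
  left_inv i := by
    apply Fin.ext
    exact ri_rf (d := d) hd
      (pf_zero β (by omega) (by rw [show (⟨0, by omega⟩ : Fin (d+1)) = 0 from rfl, hb0]))
      (by rw [pf, dif_pos (by omega : 1 < d + 1), hb1 (by omega) (by omega)])
      (fun t ht => by have := pf_lt' β t (by omega); omega)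
      (fun t ht => by have := pf_lt' β⁻¹ t (by omega); omega)
      (fun t => pf_comp' β t) (fun t => pf_comp β t)
      (show i.val ≤ d - 1 by omega)
  right_inv v := by
    apply Fin.ext
    exact rf_ri (d := d) hd
      (pf_zero β (by omega) (by rw [show (⟨0, by omega⟩ : Fin (d+1)) = 0 from rfl, hb0]))
      (by rw [pf, dif_pos (by omega : 1 < d + 1), hb1 (by omega) (by omega)])
      (fun t ht => by have := pf_lt' β t (by omega); omega)
      (fun t ht => by have := pf_lt' β⁻¹ t (by omega); omega)
      (fun t => pf_comp' β t) (fun t => pf_comp β t)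
      (show v.val ≤ d - 1 by omega)

lemma restr_val {d : ℕ} (hd : 2 ≤ d) (β : Equiv.Perm (Fin (d + 1))) (hb0 : β 0 = 0)
    (hb1 : ∀ (h : 1 < d + 1) (h' : d < d + 1), β ⟨1, h⟩ = ⟨d, h'⟩) (i : Fin (d - 1 + 1)) :
    ((restr d hd β hb0 hb1) i).val = rf (pf (d + 1) β) i.val := rfl


lemma pf_app {m : ℕ} {σ : Equiv.Perm (Fin m)} {t : ℕ} (h : t < m) :
    pf m σ t = (σ ⟨t, h⟩).val := by rw [pf, dif_pos h]

lemma rf_pos {pb : ℕ → ℕ} {i : ℕ} (h : i ≠ 0) : rf pb i = pb (i + 1) := by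
  rw [rf, if_neg h]

lemma xf_zero {d : ℕ} {pa : ℕ → ℕ} : xf d pa 0 = 0 := by simp [xf]

lemma xf_one {d : ℕ} {pa : ℕ → ℕ} (hd : 2 ≤ d) : xf d pa 1 = d := by
  rw [xf, if_neg (by omega), if_pos rfl]

theorem beta_card (d : ℕ) (hd : 2 ≤ d) :
    Nat.card {β : Equiv.Perm (Fin (d + 1)) // β 0 = 0 ∧
      (∀ (h : 1 < d + 1) (h' : d < d + 1), β ⟨1, h⟩ = ⟨d, h'⟩) ∧
      ∀ (i : ℕ), 1 ≤ i → i ≤ d - 1 → ∀ (ha : i + 1 < d + 1) (hb : d + 1 - i < d + 1),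
        (β ⟨i + 1, ha⟩).val + (β ⟨d + 1 - i, hb⟩).val = d}
    = 2 ^ ((d - 1) / 2) * Nat.factorial ((d - 1) / 2) := by
  rw [← core_card (d - 1) ((d - 1) / 2) (by omega) (by omega)]
  refine (Nat.card_eq_of_bijective (fun A => ⟨extp d hd A.1 A.2.1, by
      apply Fin.ext
      rw [extp_val]
      show xf d _ 0 = 0
      exact xf_zero, by
      intro h h'
      apply Fin.ext
      rw [extp_val]
      show xf d _ 1 = d
      exact xf_one hd, by
      intro i h1 h2 ha hb
      have hp : i < d - 1 + 1 := by omega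
      have hq2 : d - i < d - 1 + 1 := by omega
      have hq : d - 1 + 1 - i < d - 1 + 1 := by omega
      have h := A.2.2 i h1 h2 hp hq
      have h2' : (A.1 ⟨d - 1 + 1 - i, hq⟩).val = (A.1 ⟨d - i, hq2⟩).val :=
        congrArg (fun x => (A.1 x).val) (Fin.ext (show d - 1 + 1 - i = d - i by omega))
      rw [extp_val, extp_val]
      show xf d _ (i + 1) + xf d _ (d + 1 - i) = d
      rw [xf_big (by omega), xf_big (by omega), Nat.add_sub_cancel,
        show d + 1 - i - 1 = d - i by omega, pf_app hp, pf_app hq2]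
      omega⟩)
    ⟨?_, ?_⟩).symm
  · -- injective
    rintro ⟨α, h0, hsym⟩ ⟨α', h0', hsym'⟩ hE
    simp only [Subtype.mk.injEq] at hE
    apply Subtype.ext
    show α = α'
    apply Equiv.ext
    intro i
    by_cases hi : i.val = 0
    · have hi0 : i = 0 := Fin.ext (show i.val = 0 from hi)
      rw [hi0, h0, h0']
    · apply Fin.ext
      have hv := congrArg Fin.val (DFunLike.congr_fun hE ⟨i.val + 1, by omega⟩)
      rw [extp_val, extp_val] at hv
      have hv' : xf d (pf (d - 1 + 1) α) (i.val + 1)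
          = xf d (pf (d - 1 + 1) α') (i.val + 1) := hv
      rw [xf_big (by omega), xf_big (by omega), Nat.add_sub_cancel,
        pf_app i.isLt, pf_app i.isLt] at hv'
      simpa using hv'
  · -- surjective
    rintro ⟨β, hb0, hb1, hbsym⟩
    have hA0 : (restr d hd β hb0 hb1) 0 = 0 := by
      apply Fin.ext
      rw [restr_val]
      show rf _ 0 = 0
      simp [rf]
    have hAsym : ∀ (i : ℕ), 1 ≤ i → i ≤ d - 1 →
        ∀ (ha : i < d - 1 + 1) (hb : d - 1 + 1 - i < d - 1 + 1),
        ((restr d hd β hb0 hb1) ⟨i, ha⟩).val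
          + ((restr d hd β hb0 hb1) ⟨d - 1 + 1 - i, hb⟩).val = d - 1 + 1 := by
      intro i h1 h2 ha hb
      have hp : i + 1 < d + 1 := by omega
      have hq : d + 1 - i < d + 1 := by omega
      have h := hbsym i h1 h2 hp hq
      rw [restr_val, restr_val]
      show rf _ i + rf _ (d - 1 + 1 - i) = d - 1 + 1
      rw [rf_pos (by omega), rf_pos (by omega),
        show d - 1 + 1 - i + 1 = d + 1 - i by omega, pf_app hp, pf_app hq]
      omega
    refine ⟨⟨restr d hd β hb0 hb1, hA0, hAsym⟩, ?_⟩
    apply Subtype.ext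
    show extp d hd (restr d hd β hb0 hb1) hA0 = β
    apply Equiv.ext
    intro j
    apply Fin.ext
    rw [extp_val]
    by_cases hj0 : j.val = 0
    · have hj : j = 0 := Fin.ext (show j.val = 0 from hj0)
      rw [hj, hb0]
      show xf d _ 0 = 0
      exact xf_zero
    · by_cases hj1 : j.val = 1
      · have hj : j = ⟨1, by omega⟩ := Fin.ext (show j.val = 1 from hj1)
        rw [hj, hb1 (by omega) (by omega)]
        show xf d _ 1 = d
        exact xf_one hd
      · have hjd : 2 ≤ j.val := by omega
        have hj1' : j.val - 1 < d - 1 + 1 := by omega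
        have hjv : j.val < d + 1 := j.isLt
        rw [xf_big hjd, pf_app hj1', restr_val]
        show rf (pf (d + 1) β) (j.val - 1) = (β j).val
        rw [rf_pos (by omega), show j.val - 1 + 1 = j.val by omega, pf_app hjv]


end Stmt11

open Stmt11 in
theorem stmt_11 (d : ℕ) (hd : 2 ≤ d) :
    Nat.card {βα : Equiv.Perm (Fin (d + 1)) × Equiv.Perm (Fin (d + 1)) //
        (βα.1 0 = 0 ∧
         βα.1 ⟨1, by omega⟩ = ⟨d, by omega⟩ ∧
         ∀ (i : ℕ) (_h1 : 1 ≤ i) (_h2 : i ≤ d - 1),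
           (βα.1 ⟨i + 1, by omega⟩).val + (βα.1 ⟨d + 1 - i, by omega⟩).val = d) ∧
        (βα.2 0 = 0 ∧
         ∀ (i : ℕ) (_h1 : 1 ≤ i) (_h2 : i ≤ d),
           (βα.2 ⟨i, by omega⟩).val + (βα.2 ⟨d + 1 - i, by omega⟩).val = d + 1)}
      = 2 ^ (d - 1) * Nat.factorial (d / 2) * Nat.factorial ((d - 1) / 2) := by
  have e := Equiv.subtypeProdEquivProd
    (p := fun β : Equiv.Perm (Fin (d + 1)) =>
      β 0 = 0 ∧ β ⟨1, by omega⟩ = ⟨d, by omega⟩ ∧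
        ∀ (i : ℕ) (_h1 : 1 ≤ i) (_h2 : i ≤ d - 1),
          (β ⟨i + 1, by omega⟩).val + (β ⟨d + 1 - i, by omega⟩).val = d)
    (q := fun α : Equiv.Perm (Fin (d + 1)) =>
      α 0 = 0 ∧ ∀ (i : ℕ) (_h1 : 1 ≤ i) (_h2 : i ≤ d),
        (α ⟨i, by omega⟩).val + (α ⟨d + 1 - i, by omega⟩).val = d + 1)
  rw [Nat.card_congr e, Nat.card_prod]
  have hβ : Nat.card {β : Equiv.Perm (Fin (d + 1)) //
      β 0 = 0 ∧ β ⟨1, by omega⟩ = ⟨d, by omega⟩ ∧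
        ∀ (i : ℕ) (_h1 : 1 ≤ i) (_h2 : i ≤ d - 1),
          (β ⟨i + 1, by omega⟩).val + (β ⟨d + 1 - i, by omega⟩).val = d}
      = 2 ^ ((d - 1) / 2) * Nat.factorial ((d - 1) / 2) := by
    rw [← beta_card d hd]
    apply Nat.card_congr
    apply Equiv.subtypeEquivRight
    intro β
    constructor
    · rintro ⟨a, b, c⟩
      exact ⟨a, fun _ _ => b, fun i h1 h2 _ _ => c i h1 h2⟩
    · rintro ⟨a, b, c⟩
      exact ⟨a, b (by omega) (by omega), fun i h1 h2 => c i h1 h2 (by omega) (by omega)⟩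
  have hα : Nat.card {α : Equiv.Perm (Fin (d + 1)) //
      α 0 = 0 ∧ ∀ (i : ℕ) (_h1 : 1 ≤ i) (_h2 : i ≤ d),
        (α ⟨i, by omega⟩).val + (α ⟨d + 1 - i, by omega⟩).val = d + 1}
      = 2 ^ (d / 2) * Nat.factorial (d / 2) := by
    rw [← core_card d (d / 2) (by omega) (by omega)]
    apply Nat.card_congr
    apply Equiv.subtypeEquivRight
    intro α
    constructor
    · rintro ⟨a, c⟩
      exact ⟨a, fun i h1 h2 _ _ => c i h1 h2⟩
    · rintro ⟨a, c⟩
      exact ⟨a, fun i h1 h2 => c i h1 h2 (by omega) (by omega)⟩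
  rw [hβ, hα]
  rw [show (2:ℕ) ^ (d - 1) = 2 ^ ((d - 1) / 2) * 2 ^ (d / 2) from by
    rw [← pow_add]; congr 1; omega]
  ring
end

section
/- Let G be a graph and T_1, ..., T_n a family of induced subtrees of G such that (i) every vertex of G lies in exactly d+2 of the trees, and (ii) any two adjacent vertices of G lie together in exactly d+1 of the trees. For a tree T_i, a root r ∈ V(T_i), and an edge of T_i oriented as (u, v) with v closer to r, the set {j : u ∈ T_j} \ {j : v ∈ T_j} has exactly one element, called the label of the oriented edge. If additionally every two trees in the family intersect and each tree has n - d - 1 vertices, then all n - d - 2 edge labels of the rooted oriented tree T_i(r) are pairwise distinct, and all are distinct from the indices {j : r ∈ T_j}. -/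
/-- `û = {j : u ∈ T j}`, the set of indices of trees containing the vertex `u`. -/
def hatSet {V : Type*} [DecidableEq V] (n : ℕ) (T : Fin n → Finset V) (u : V) :
    Finset (Fin n) :=
  Finset.univ.filter fun j => u ∈ T j

/-!
Root `T_i` at `r` and call `u ∈ T_i` a top vertex of `T_j` if `u ∈ T_j` but no neighbour of `u`
closer to `r` is. Since `T_i` is a tree, a vertex `u ≠ r` has exactly one neighbour `v` closer to
`r`, so `u` is a top vertex of `T_j` exactly when `j` is the label of the edge `(u, v)`; and `r` is
a top vertex of `T_j` exactly when `j ∈ r̂`. Every `T_j` meets `T_i`, so its vertex closest to `r`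
is a top vertex. On the other hand there are at most
`|r̂| + (|T_i| - 1) = (d + 2) + (n - d - 2) = n` pairs (index, top vertex), so every `T_j` has
exactly one top vertex.
-/

open Finset Function

namespace Finset

theorem pairwiseDisjoint_of_sum_card_le_card {α ι : Type*} [Fintype ι] {s : Finset α}
    {L : α → Finset ι} (hcover : ∀ j, ∃ u ∈ s, j ∈ L u)
    (hsum : ∑ u ∈ s, #(L u) ≤ Fintype.card ι) : (s : Set α).PairwiseDisjoint L := by
  classical
  intro u hu u' hu' hne
  refine disjoint_left.mpr fun j hj hj' => ?_
  have hcount : ∑ u ∈ s, #(L u) = ∑ j, #{u ∈ s | j ∈ L u} := by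
    simpa [bipartiteAbove, bipartiteBelow, filter_mem_eq_inter] using
      sum_card_bipartiteAbove_eq_sum_card_bipartiteBelow (fun u j => j ∈ L u) (s := s)
        (t := (univ : Finset ι))
  have hlt : ∑ _j : ι, 1 < ∑ j, #{u ∈ s | j ∈ L u} := by
    refine sum_lt_sum (fun k _ => ?_) ⟨j, mem_univ j, ?_⟩
    · obtain ⟨w, hw, hk⟩ := hcover k
      exact card_pos.mpr ⟨w, mem_filter.mpr ⟨hw, hk⟩⟩
    · exact one_lt_card.mpr
        ⟨u, by simp [mem_coe.mp hu, hj], u', by simp [mem_coe.mp hu', hj'], hne⟩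
  simp only [sum_const, card_univ, smul_eq_mul, mul_one] at hlt
  omega

end Finset

namespace SimpleGraph

variable {α ι : Type*} {H : SimpleGraph α} {r u v w : α}

theorem Reachable.exists_adj_dist_lt (hreach : H.Reachable u r) (hu : u ≠ r) :
    ∃ v, H.Adj u v ∧ H.dist v r < H.dist u r := by
  obtain ⟨p, hp⟩ := hreach.exists_walk_length_eq_dist
  cases p with
  | nil => exact absurd rfl hu
  | cons h q =>
    rw [Walk.length_cons] at hp
    exact ⟨_, h, (dist_le q).trans_lt (by omega)⟩

theorem IsTree.eq_of_adj_of_dist_lt (hH : H.IsTree) (hv : H.Adj u v) (hw : H.Adj u w)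
    (hvr : H.dist v r < H.dist u r) (hwr : H.dist w r < H.dist u r) : v = w := by
  have hgeodesic : ∀ {x}, H.Adj u x → H.dist x r < H.dist u r → ∃ p : H.Path u r, p.1.snd = x := by
    intro x hx hxr
    obtain ⟨q, hq⟩ := (hH.connected x r).exists_walk_length_eq_dist
    have hstep := hH.dist_eq_dist_add_one_of_adj r hx
    rw [dist_comm, dist_comm (u := r)] at hstep
    exact ⟨⟨.cons hx q, Walk.isPath_of_length_eq_dist _ (by simp; omega)⟩, Walk.snd_cons q hx⟩
  obtain ⟨p, rfl⟩ := hgeodesic hv hvr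
  obtain ⟨p', rfl⟩ := hgeodesic hw hwr
  rw [(hH.isAcyclic.subsingleton_path u r).elim p p']

open Classical in
/-- The `j` such that `u` is a top vertex of `{w | j ∈ hat w}` in `H` rooted at `r`. In a tree these
are the labels `hat u \ hat v` of the edge from `u ≠ r` to its parent `v`, and all of `hat r` at
the root. -/
noncomputable def topLabels (H : SimpleGraph α) (r : α) (hat : α → Finset ι) (u : α) : Finset ι :=
  {j ∈ hat u | ∀ v, H.Adj u v → H.dist v r < H.dist u r → j ∉ hat v}

variable {hat : α → Finset ι}

theorem mem_topLabels {j : ι} : j ∈ topLabels H r hat u ↔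
    j ∈ hat u ∧ ∀ v, H.Adj u v → H.dist v r < H.dist u r → j ∉ hat v := by
  simp only [topLabels, mem_filter]

theorem topLabels_subset : topLabels H r hat u ⊆ hat u :=
  fun _ hj => (mem_topLabels.mp hj).1

theorem topLabels_root : topLabels H r hat r = hat r := by
  ext j
  simp [mem_topLabels]

theorem IsTree.topLabels_eq_sdiff [DecidableEq ι] (hH : H.IsTree) (huv : H.Adj u v)
    (hvr : H.dist v r < H.dist u r) : topLabels H r hat u = hat u \ hat v := by
  ext j
  simp only [mem_topLabels, mem_sdiff]
  refine ⟨fun ⟨hu, htop⟩ => ⟨hu, htop v huv hvr⟩, fun ⟨hu, hv⟩ => ⟨hu, fun w huw hwr => ?_⟩⟩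
  rwa [← hH.eq_of_adj_of_dist_lt huv huw hvr hwr]

theorem exists_mem_topLabels {j : ι} (hj : ∃ u, j ∈ hat u) : ∃ u, j ∈ topLabels H r hat u := by
  obtain ⟨m, hm, hmin⟩ := (measure fun u => H.dist u r).wf.has_min {u | j ∈ hat u} hj
  exact ⟨m, mem_topLabels.mpr ⟨hm, fun v _ hvr hv => hmin v hv hvr⟩⟩

theorem Connected.sum_card_topLabels_le [Fintype α] [DecidableEq ι] (hH : H.Connected)
    (hedge : ∀ u v, H.Adj u v → #(hat u \ hat v) ≤ 1) (r : α) :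
    ∑ u, #(topLabels H r hat u) ≤ #(hat r) + (Fintype.card α - 1) := by
  classical
  have hparent : ∀ u ∈ univ.erase r, #(topLabels H r hat u) ≤ 1 := by
    intro u hu
    obtain ⟨v, huv, hvr⟩ := (hH u r).exists_adj_dist_lt (ne_of_mem_erase hu)
    refine le_trans (card_le_card fun j hj => mem_sdiff.mpr ⟨topLabels_subset hj, ?_⟩)
      (hedge u v huv)
    exact (mem_topLabels.mp hj).2 v huv hvr
  rw [← add_sum_erase _ _ (mem_univ r), topLabels_root]
  have := sum_le_card_nsmul _ _ _ hparent
  simp only [card_erase_of_mem (mem_univ r), card_univ, smul_eq_mul, mul_one] at this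
  omega

theorem Connected.pairwiseDisjoint_topLabels [Fintype α] [Fintype ι] [DecidableEq ι]
    (hH : H.Connected) (hcover : ∀ j, ∃ u, j ∈ hat u)
    (hedge : ∀ u v, H.Adj u v → #(hat u \ hat v) ≤ 1)
    (hcount : #(hat r) + (Fintype.card α - 1) ≤ Fintype.card ι) :
    Pairwise (Disjoint on topLabels H r hat) := by
  have := pairwiseDisjoint_of_sum_card_le_card (s := univ)
    (fun j => (exists_mem_topLabels (hcover j)).imp fun u hu => ⟨mem_univ u, hu⟩)
    ((hH.sum_card_topLabels_le hedge r).trans hcount)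
  rw [coe_univ] at this
  exact Set.pairwise_univ.mp this

end SimpleGraph

theorem hatSet_inter {V : Type*} [DecidableEq V] (n : ℕ) (T : Fin n → Finset V) (u v : V) :
    hatSet n T u ∩ hatSet n T v = univ.filter fun j => u ∈ T j ∧ v ∈ T j :=
  (filter_and _ _ _).symm

theorem stmt_17_general {V : Type*} [DecidableEq V] (G : SimpleGraph V)
    (n d : ℕ) (T : Fin n → Finset V)
    (htree : ∀ j, (G.induce ((T j : Set V))).IsTree)
    (hvert : ∀ v : V, (hatSet n T v).card = d + 2)
    (hedge : ∀ u v : V, G.Adj u v →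
      (Finset.univ.filter fun j => u ∈ T j ∧ v ∈ T j).card = d + 1)
    (hint : ∀ j j' : Fin n, ((T j) ∩ (T j')).Nonempty)
    (hcard : ∀ j, (T j).card = n - d - 1)
    (i : Fin n) (r : V) (hr : r ∈ T i) :
    -- (a) the label of each oriented edge is well defined: `û \ v̂` is a singleton
    (∀ u v : (T i : Set V), (G.induce ((T i : Set V))).Adj u v →
      (hatSet n T (u : V) \ hatSet n T (v : V)).card = 1) ∧
    -- (b) the labels of distinct edges oriented towards the root `r` are distinct
    (∀ u v u' v' : (T i : Set V),
      (G.induce ((T i : Set V))).Adj u v →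
      (G.induce ((T i : Set V))).Adj u' v' →
      (G.induce ((T i : Set V))).dist v ⟨r, Finset.mem_coe.mpr hr⟩
        < (G.induce ((T i : Set V))).dist u ⟨r, Finset.mem_coe.mpr hr⟩ →
      (G.induce ((T i : Set V))).dist v' ⟨r, Finset.mem_coe.mpr hr⟩
        < (G.induce ((T i : Set V))).dist u' ⟨r, Finset.mem_coe.mpr hr⟩ →
      (u, v) ≠ (u', v') →
      hatSet n T (u : V) \ hatSet n T (v : V) ≠ hatSet n T (u' : V) \ hatSet n T (v' : V)) ∧
    -- (c) every label differs from all indices of trees containing `r`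
    (∀ u v : (T i : Set V),
      (G.induce ((T i : Set V))).Adj u v →
      (G.induce ((T i : Set V))).dist v ⟨r, Finset.mem_coe.mpr hr⟩
        < (G.induce ((T i : Set V))).dist u ⟨r, Finset.mem_coe.mpr hr⟩ →
      Disjoint (hatSet n T (u : V) \ hatSet n T (v : V)) (hatSet n T r)) := by
  set H := G.induce ((T i : Set V))
  set r₀ : (T i : Set V) := ⟨r, Finset.mem_coe.mpr hr⟩
  have hlabel : ∀ u v : (T i : Set V), H.Adj u v → #(hatSet n T u \ hatSet n T v) = 1 := by
    intro u v huv
    rw [card_sdiff, inter_comm, hatSet_inter, hvert, hedge u v huv]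
    omega
  have hcover : ∀ j, ∃ u : (T i : Set V), j ∈ hatSet n T u := by
    intro j
    obtain ⟨x, hx⟩ := hint j i
    obtain ⟨hxj, hxi⟩ := mem_inter.mp hx
    exact ⟨⟨x, mem_coe.mpr hxi⟩, by simpa [hatSet] using hxj⟩
  have hcount : #(hatSet n T r) + (Fintype.card (T i : Set V) - 1) ≤ n := by
    have : 0 < #(T i) := card_pos.mpr ⟨r, hr⟩
    simp only [hvert, coe_sort_coe, Fintype.card_coe, hcard i] at this ⊢
    omega
  have hdisj := (htree i).connected.pairwiseDisjoint_topLabels (r := r₀)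
    hcover (fun u v huv => (hlabel u v huv).le) (by simpa using hcount)
  have htop : ∀ {u v}, H.Adj u v → H.dist v r₀ < H.dist u r₀ →
      H.topLabels r₀ (fun u => hatSet n T u) u = hatSet n T u \ hatSet n T v :=
    (htree i).topLabels_eq_sdiff
  refine ⟨hlabel, fun u v u' v' huv hu'v' hvr hv'r hne heq => ?_, fun u v huv hvr => ?_⟩
  · by_cases hu : u = u'
    · subst hu
      exact hne (by rw [(htree i).eq_of_adj_of_dist_lt huv hu'v' hvr hv'r])
    · have := hdisj hu
      rw [onFun, htop huv hvr, htop hu'v' hv'r, ← heq, disjoint_self_iff_empty] at this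
      simpa [this] using hlabel u v huv
  · have hur : u ≠ r₀ := by rintro rfl; simp at hvr
    have := hdisj hur
    rwa [onFun, htop huv hvr, SimpleGraph.topLabels_root] at this

theorem stmt_17 {V : Type*} [Fintype V] [DecidableEq V] (G : SimpleGraph V)
    (n d : ℕ) (T : Fin n → Finset V)
    (htree : ∀ j, (G.induce ((T j : Set V))).IsTree)
    (hvert : ∀ v : V, (hatSet n T v).card = d + 2)
    (hedge : ∀ u v : V, G.Adj u v →
      (Finset.univ.filter fun j => u ∈ T j ∧ v ∈ T j).card = d + 1)
    (hint : ∀ j j' : Fin n, ((T j) ∩ (T j')).Nonempty)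
    (hcard : ∀ j, (T j).card = n - d - 1)
    (i : Fin n) (r : V) (hr : r ∈ T i) :
    -- (a) the label of each oriented edge is well defined: `û \ v̂` is a singleton
    (∀ u v : (T i : Set V), (G.induce ((T i : Set V))).Adj u v →
      (hatSet n T (u : V) \ hatSet n T (v : V)).card = 1) ∧
    -- (b) the labels of distinct edges oriented towards the root `r` are distinct
    (∀ u v u' v' : (T i : Set V),
      (G.induce ((T i : Set V))).Adj u v →
      (G.induce ((T i : Set V))).Adj u' v' →
      (G.induce ((T i : Set V))).dist v ⟨r, Finset.mem_coe.mpr hr⟩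
        < (G.induce ((T i : Set V))).dist u ⟨r, Finset.mem_coe.mpr hr⟩ →
      (G.induce ((T i : Set V))).dist v' ⟨r, Finset.mem_coe.mpr hr⟩
        < (G.induce ((T i : Set V))).dist u' ⟨r, Finset.mem_coe.mpr hr⟩ →
      (u, v) ≠ (u', v') →
      hatSet n T (u : V) \ hatSet n T (v : V) ≠ hatSet n T (u' : V) \ hatSet n T (v' : V)) ∧
    -- (c) every label differs from all indices of trees containing `r`
    (∀ u v : (T i : Set V),
      (G.induce ((T i : Set V))).Adj u v →
      (G.induce ((T i : Set V))).dist v ⟨r, Finset.mem_coe.mpr hr⟩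
        < (G.induce ((T i : Set V))).dist u ⟨r, Finset.mem_coe.mpr hr⟩ →
      Disjoint (hatSet n T (u : V) \ hatSet n T (v : V)) (hatSet n T r)) :=
  stmt_17_general G n d T htree hvert hedge hint hcard i r hr
end
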